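/- arXiv:1112.5050 — 7 statements merged into one kernel-verified Lean document; each statement's English description precedes it below -/
import Mathlib

section
/- For every real q > 1 and every y > 0, the integral ∫₀^y s^q(1+s)^q/(1+2s)^{q-1} ds is strictly less than (2/(q+2)) · y^{q+1}(1+y)^{q+1}/(1+2y)^q. -/
/-!
With `G t = t^(q+1) (1+t)^(q+1) / (1+2t)^q`, the identity `(1+2t)^2 = 1 + 4t(1+t)` gives
`G' = (q+2)/2 · t^q (1+t)^q / (1+2t)^(q-1) + q/2 · t^q (1+t)^q / (1+2t)^(q+1)`.
So `2/(q+2) · G` is an antiderivative of the integrand plus a term that is positive on `(0, y)`,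
and the fundamental theorem of calculus gives the strict inequality.
-/

open Real intervalIntegral MeasureTheory Set

theorem intervalIntegral_lt_sub_of_hasDerivAt_add {f g F : ℝ → ℝ} {a b : ℝ} (hab : a < b)
    (hderiv : ∀ x ∈ uIcc a b, HasDerivAt F (f x + g x) x)
    (hf : IntervalIntegrable f volume a b) (hg : IntervalIntegrable g volume a b)
    (hg_pos : ∀ x ∈ Ioo a b, 0 < g x) :
    ∫ x in a..b, f x < F b - F a := by
  rw [← integral_eq_sub_of_hasDerivAt hderiv (hf.add hg), integral_add hf hg]
  linarith [intervalIntegral_pos_of_pos_on hg hg_pos hab]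

theorem continuousOn_rpow_mul_rpow_div_rpow {q : ℝ} (hq : 0 ≤ q) (r : ℝ) :
    ContinuousOn (fun s : ℝ => s ^ q * (1 + s) ^ q / (1 + 2 * s) ^ r) (Ici 0) := by
  intro s (hs : 0 ≤ s)
  have h2s : 0 < 1 + 2 * s := by linarith
  apply ContinuousAt.continuousWithinAt
  fun_prop (disch := first | exact Or.inr hq | exact Or.inl h2s.ne' | positivity)

theorem hasDerivAt_rpow_mul_rpow_div_rpow {q s : ℝ} (hq : 0 ≤ q) (hs : 0 ≤ s) :
    HasDerivAt (fun t : ℝ => t ^ (q + 1) * (1 + t) ^ (q + 1) / (1 + 2 * t) ^ q)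
      ((q + 2) / 2 * (s ^ q * (1 + s) ^ q / (1 + 2 * s) ^ (q - 1)) +
        q / 2 * (s ^ q * (1 + s) ^ q / (1 + 2 * s) ^ (q + 1))) s := by
  have h1s : 0 < 1 + s := by linarith
  have h2s : 0 < 1 + 2 * s := by linarith
  have hnum₁ : HasDerivAt (fun t : ℝ => t ^ (q + 1)) ((q + 1) * s ^ q) s := by
    simpa using hasDerivAt_rpow_const (x := s) (p := q + 1) (Or.inr (by linarith))
  have hnum₂ : HasDerivAt (fun t : ℝ => (1 + t) ^ (q + 1)) ((q + 1) * (1 + s) ^ q) s := by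
    simpa using ((hasDerivAt_id s).const_add 1).rpow_const (p := q + 1) (Or.inl h1s.ne')
  have hden : HasDerivAt (fun t : ℝ => (1 + 2 * t) ^ q) (2 * q * (1 + 2 * s) ^ (q - 1)) s := by
    simpa [mul_comm, mul_assoc] using
      (((hasDerivAt_id s).const_mul 2).const_add 1).rpow_const (p := q) (Or.inl h2s.ne')
  refine ((hnum₁.mul hnum₂).div hden (by positivity)).congr_deriv ?_
  have hq1 : q + 1 ≠ 0 := by linarith
  simp only [Pi.mul_apply]
  rw [rpow_add' hs hq1, rpow_add' h1s.le hq1, rpow_add' h2s.le hq1, rpow_sub_one h2s.ne',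
    rpow_one, rpow_one, rpow_one]
  have : (1 + 2 * s) ^ q ≠ 0 := by positivity
  field_simp
  ring

theorem integral_rpow_mul_rpow_div_rpow_lt {q y : ℝ} (hq : 0 < q) (hy : 0 < y) :
    (∫ s in (0:ℝ)..y, s ^ q * (1 + s) ^ q / (1 + 2 * s) ^ (q - 1)) <
      (2 / (q + 2)) * (y ^ (q + 1) * (1 + y) ^ (q + 1) / (1 + 2 * y) ^ q) := by
  have hint (r : ℝ) : IntervalIntegrable
      (fun s : ℝ => s ^ q * (1 + s) ^ q / (1 + 2 * s) ^ r) volume 0 y :=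
    ((continuousOn_rpow_mul_rpow_div_rpow hq.le r).mono
      Icc_subset_Ici_self).intervalIntegrable_of_Icc hy.le
  have hderiv : ∀ s ∈ uIcc 0 y,
      HasDerivAt (fun t => 2 / (q + 2) * (t ^ (q + 1) * (1 + t) ^ (q + 1) / (1 + 2 * t) ^ q))
        (s ^ q * (1 + s) ^ q / (1 + 2 * s) ^ (q - 1) +
          q / (q + 2) * (s ^ q * (1 + s) ^ q / (1 + 2 * s) ^ (q + 1))) s := by
    intro s hs
    refine ((hasDerivAt_rpow_mul_rpow_div_rpow hq.le
      (uIcc_of_le hy.le ▸ hs).1).const_mul (2 / (q + 2))).congr_deriv ?_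
    field_simp
  have hlt := intervalIntegral_lt_sub_of_hasDerivAt_add hy hderiv (hint (q - 1))
    ((hint (q + 1)).const_mul _) (fun s hs => by have := hs.1; positivity)
  simpa [zero_rpow (by linarith : q + 1 ≠ 0)] using hlt

theorem stmt_0 (q y : ℝ) (hq : 1 < q) (hy : 0 < y) :
    (∫ s in (0:ℝ)..y, s ^ q * (1 + s) ^ q / (1 + 2 * s) ^ (q - 1)) <
      (2 / (q + 2)) * (y ^ (q + 1) * (1 + y) ^ (q + 1) / (1 + 2 * y) ^ q) :=
  integral_rpow_mul_rpow_div_rpow_lt (by linarith) hy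
end

section
/- For every real q > 1 and every y > 0, the integral ∫₀^y s^q(1+s)^q/(1+2s)^{q-1} ds is strictly greater than (1/(q+1)) · y^{q+1}(1+y)^{q+1}/(1+2y)^q. -/
/-!
Put `u = s (1 + s)`, so that `u' = 1 + 2 s` and `u'' = 2`. Then
`F = u ^ (q + 1) / ((q + 1) u' ^ q)` has derivative
`u ^ q / u' ^ (q - 1) - (2 q / (q + 1)) u ^ (q + 1) / u' ^ (q + 1)`: the integrand minus a term that
is positive for `s > 0`. Since `F 0 = 0`, integrating over `(0, y)` gives the strict inequality.
-/

open Real Set intervalIntegral MeasureTheory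

theorem sub_lt_integral_of_hasDerivAt_sub {F f g : ℝ → ℝ} {a b : ℝ} (hab : a < b)
    (hF : ∀ x ∈ uIcc a b, HasDerivAt F (f x - g x) x) (hf : IntervalIntegrable f volume a b)
    (hg : ContinuousOn g (uIcc a b)) (hg_pos : ∀ x ∈ Ioo a b, 0 < g x) :
    F b - F a < ∫ x in a..b, f x := by
  have hgi : IntervalIntegrable g volume a b := hg.intervalIntegrable
  have hFTC : ∫ x in a..b, (f x - g x) = F b - F a :=
    integral_eq_sub_of_hasDerivAt hF (hf.sub hgi)
  have hg_int_pos : 0 < ∫ x in a..b, g x := intervalIntegral_pos_of_pos_on hgi hg_pos hab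
  rw [integral_sub hf hgi] at hFTC
  linarith

theorem HasDerivAt.rpow_add_one_div_rpow {u v : ℝ → ℝ} {u' v' x p : ℝ}
    (hu : HasDerivAt u u' x) (hv : HasDerivAt v v' x) (hp : 0 ≤ p) (hvx : 0 < v x) :
    HasDerivAt (fun t => u t ^ (p + 1) / v t ^ p)
      ((p + 1) * u x ^ p * u' / v x ^ p - p * u x ^ (p + 1) * v' / v x ^ (p + 1)) x := by
  have hvp : 0 < v x ^ p := rpow_pos_of_pos hvx p
  refine ((hu.rpow_const (Or.inr (by linarith))).div (hv.rpow_const (Or.inl hvx.ne'))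
    hvp.ne').congr_deriv ?_
  rw [add_sub_cancel_right, rpow_sub_one hvx.ne', rpow_add_one hvx.ne']
  field_simp

theorem hasDerivAt_primitive {q s : ℝ} (hq : 0 ≤ q) (hs : 0 ≤ s) :
    HasDerivAt (fun t => (t * (1 + t)) ^ (q + 1) / (1 + 2 * t) ^ q / (q + 1))
      (s ^ q * (1 + s) ^ q / (1 + 2 * s) ^ (q - 1) -
        2 * q / (q + 1) * ((s * (1 + s)) ^ (q + 1) / (1 + 2 * s) ^ (q + 1))) s := by
  have hu : HasDerivAt (fun t => t * (1 + t)) (1 + 2 * s) s := by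
    simpa [two_mul, add_assoc] using (hasDerivAt_id' s).fun_mul ((hasDerivAt_id' s).const_add 1)
  have hv : HasDerivAt (fun t => 1 + 2 * t) 2 s := by
    simpa using ((hasDerivAt_id s).const_mul (2 : ℝ)).const_add 1
  have h2s : 0 < 1 + 2 * s := by linarith
  refine ((hu.rpow_add_one_div_rpow hv hq h2s).div_const (q + 1)).congr_deriv ?_
  rw [mul_rpow hs (by linarith), rpow_sub_one h2s.ne']
  field_simp

theorem continuousOn_integrand {q : ℝ} (hq : 0 ≤ q) :
    ContinuousOn (fun s : ℝ => s ^ q * (1 + s) ^ q / (1 + 2 * s) ^ (q - 1)) (Ici 0) := by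
  have h2s : ∀ s ∈ Ici (0 : ℝ), 0 < 1 + 2 * s := fun s hs => by simp only [mem_Ici] at hs; linarith
  refine ContinuousOn.div (by fun_prop (disch := simp [hq])) ?_
    fun s hs => (rpow_pos_of_pos (h2s s hs) _).ne'
  exact ContinuousOn.rpow_const (by fun_prop) fun s hs => Or.inl (h2s s hs).ne'

theorem continuousOn_correction {q : ℝ} (hq : 0 ≤ q) :
    ContinuousOn (fun s : ℝ => 2 * q / (q + 1) * ((s * (1 + s)) ^ (q + 1) / (1 + 2 * s) ^ (q + 1)))
      (Ici 0) := by
  have h2s : ∀ s ∈ Ici (0 : ℝ), 0 < 1 + 2 * s := fun s hs => by simp only [mem_Ici] at hs; linarith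
  refine continuousOn_const.mul (ContinuousOn.div ?_ ?_
    fun s hs => (rpow_pos_of_pos (h2s s hs) _).ne')
  · exact ContinuousOn.rpow_const (by fun_prop) fun _ _ => Or.inr (by linarith)
  · exact ContinuousOn.rpow_const (by fun_prop) fun s hs => Or.inl (h2s s hs).ne'

theorem stmt_1 (q y : ℝ) (hq : 1 < q) (hy : 0 < y) :
    (1 / (q + 1)) * (y ^ (q + 1) * (1 + y) ^ (q + 1) / (1 + 2 * y) ^ q) <
      ∫ s in (0:ℝ)..y, s ^ q * (1 + s) ^ q / (1 + 2 * s) ^ (q - 1) := by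
  have hq0 : 0 < q := by linarith
  have hIcc : uIcc 0 y ⊆ Ici 0 := by rw [uIcc_of_le hy.le]; exact Icc_subset_Ici_self
  have key := sub_lt_integral_of_hasDerivAt_sub hy
    (fun s hs => hasDerivAt_primitive hq0.le (hIcc hs))
    ((continuousOn_integrand hq0.le).mono hIcc).intervalIntegrable
    ((continuousOn_correction hq0.le).mono hIcc)
    (fun s hs => by have := hs.1; positivity)
  rw [mul_rpow hy.le (by linarith), zero_mul, zero_rpow (by linarith), zero_div, zero_div,
    sub_zero] at key
  rwa [one_div_mul_eq_div]
end

section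
/- For every real q > 1 and every y > 0, one has y^{q+1}/2^{q-1} + ((q+1)/((q+2)·2^{q-1})) · y^q < y^q (1+y)^q / (1+2y)^{q-1} < ((q+2)/(q+1)) · y^{q+1} + y^q. -/
open Real

/-!
After dividing by `y ^ q`, both bounds compare `(1 + y) ^ q / (1 + 2 * y) ^ (q - 1)` with an
affine function of `y`. The lower bound is Bernoulli's inequality for
`(2 * (1 + y)) ^ q = (1 + 2 * y) ^ q * (1 + 1 / (1 + 2 * y)) ^ q`; the upper bound is
`(1 - t) ^ (q - 1) * (1 + (q - 1) * t) < 1` at `t = y / (1 + 2 * y)`, which follows from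
`1 - t < exp (-t)` and `1 + s < exp s`. What is left is a polynomial inequality in `q` and `y`.
-/

theorem one_sub_rpow_mul_one_add_mul_lt_one {p t : ℝ} (hp : 0 < p) (ht : t < 1) (ht0 : t ≠ 0) :
    (1 - t) ^ p * (1 + p * t) < 1 := by
  have hexp : (1 - t) ^ p < exp (-(p * t)) :=
    calc (1 - t) ^ p < exp (-t) ^ p :=
          rpow_lt_rpow (by linarith) (by linarith [add_one_lt_exp (neg_ne_zero.2 ht0)]) hp
      _ = exp (-(p * t)) := by rw [← exp_mul]; ring_nf
  rcases le_or_gt (1 + p * t) 0 with hneg | hpos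
  · exact (mul_nonpos_of_nonneg_of_nonpos (rpow_nonneg (by linarith) p) hneg).trans_lt one_pos
  · calc (1 - t) ^ p * (1 + p * t) < exp (-(p * t)) * exp (p * t) :=
          mul_lt_mul'' hexp (by linarith [add_one_lt_exp (mul_ne_zero hp.ne' ht0)])
            (rpow_nonneg (by linarith) p) hpos.le
      _ = 1 := by rw [← exp_add, neg_add_cancel, exp_zero]

theorem add_div_two_rpow_lt_rpow_div_rpow {q y : ℝ} (hq : 1 < q) (hy : 0 < 1 + 2 * y) :
    (1 + 2 * y + q) / 2 ^ q < (1 + y) ^ q / (1 + 2 * y) ^ (q - 1) := by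
  have hbern : 1 + q * (1 + 2 * y)⁻¹ < (1 + (1 + 2 * y)⁻¹) ^ q :=
    one_add_mul_self_lt_rpow_one_add (by linarith [inv_pos.2 hy]) (inv_ne_zero hy.ne') hq
  have key : (1 + 2 * y) ^ (q - 1) * (1 + 2 * y + q) < 2 ^ q * (1 + y) ^ q :=
    calc (1 + 2 * y) ^ (q - 1) * (1 + 2 * y + q)
        = (1 + 2 * y) ^ q * (1 + q * (1 + 2 * y)⁻¹) := by
          rw [rpow_sub_one hy.ne']; field_simp
      _ < (1 + 2 * y) ^ q * (1 + (1 + 2 * y)⁻¹) ^ q := by gcongr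
      _ = 2 ^ q * (1 + y) ^ q := by
          rw [← mul_rpow hy.le (by positivity), ← mul_rpow zero_le_two (by linarith)]
          congr 1; field_simp; ring
  rw [div_lt_div_iff₀ (by positivity) (by positivity)]
  linarith

theorem rpow_div_rpow_lt_mul_div {q y : ℝ} (hq : 1 < q) (hy : 0 < y) :
    (1 + y) ^ q / (1 + 2 * y) ^ (q - 1) < (1 + y) * (1 + 2 * y) / (1 + (q + 1) * y) := by
  have h2y : 0 < 1 + 2 * y := by linarith
  have key := one_sub_rpow_mul_one_add_mul_lt_one (p := q - 1) (t := y / (1 + 2 * y))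
    (by linarith) (by rw [div_lt_one h2y]; linarith) (by positivity)
  rw [show 1 - y / (1 + 2 * y) = (1 + y) / (1 + 2 * y) by field_simp; ring,
    show 1 + (q - 1) * (y / (1 + 2 * y)) = (1 + (q + 1) * y) / (1 + 2 * y) by field_simp; ring,
    div_rpow (by linarith) h2y.le] at key
  have hq' : 0 < 1 + (q + 1) * y := by nlinarith
  rw [div_mul_div_comm, div_lt_one (by positivity)] at key
  have hsplit : (1 + y) ^ q = (1 + y) ^ (q - 1) * (1 + y) := by
    rw [rpow_sub_one (by linarith)]; field_simp
  rw [div_lt_div_iff₀ (by positivity) hq', hsplit]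
  linarith [mul_lt_mul_of_pos_left key (by linarith : (0 : ℝ) < 1 + y)]

theorem stmt_6 (q y : ℝ) (hq : 1 < q) (hy : 0 < y) :
    y ^ (q + 1) / 2 ^ (q - 1) + ((q + 1) / ((q + 2) * 2 ^ (q - 1))) * y ^ q <
      y ^ q * (1 + y) ^ q / (1 + 2 * y) ^ (q - 1) ∧
    y ^ q * (1 + y) ^ q / (1 + 2 * y) ^ (q - 1) <
      ((q + 2) / (q + 1)) * y ^ (q + 1) + y ^ q := by
  have hyq : 0 < y ^ q := rpow_pos_of_pos hy q
  rw [mul_div_assoc (y ^ q), rpow_add hy, rpow_one]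
  constructor
  · have hweaken :
        y / 2 ^ (q - 1) + (q + 1) / ((q + 2) * 2 ^ (q - 1)) ≤ (1 + 2 * y + q) / 2 ^ q := by
      rw [rpow_sub_one two_ne_zero]
      field_simp
      linarith [mul_pos (by linarith : (0 : ℝ) < q) (by linarith : (0 : ℝ) < q + 1)]
    calc _ = y ^ q * (y / 2 ^ (q - 1) + (q + 1) / ((q + 2) * 2 ^ (q - 1))) := by ring
      _ < _ := mul_lt_mul_of_pos_left
          (hweaken.trans_lt (add_div_two_rpow_lt_rpow_div_rpow hq (by linarith))) hyq
  · have hpoly : (1 + y) * (1 + 2 * y) / (1 + (q + 1) * y) ≤ (q + 2) / (q + 1) * y + 1 := by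
      rw [div_le_iff₀ (by nlinarith)]
      field_simp
      linarith [mul_pos (mul_pos hy hy) (by nlinarith : (0 : ℝ) < q * (q + 1)),
        mul_pos hy (by nlinarith : (0 : ℝ) < q ^ 2)]
    calc _ < y ^ q * ((q + 2) / (q + 1) * y + 1) :=
          mul_lt_mul_of_pos_left ((rpow_div_rpow_lt_mul_div hq hy).trans_le hpoly) hyq
      _ = _ := by ring
end

section
/- For every real q > 1 and every y > 0, one has (y^{q+2} + y^{q+1})/((q+2)·2^{q-1}) < ∫₀^y s^q(1+s)^q/(1+2s)^{q-1} ds < (y^{q+2} + y^{q+1})/(q+1). -/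
open Real

/-! For `s ≥ 0` the integrand is `s ^ q * (1 + s) * ((1 + s) / (1 + 2 * s)) ^ (q - 1)` and the ratio
`(1 + s) / (1 + 2 * s)` lies in `[1/2, 1]`, so for `q ≥ 1` the integrand is squeezed between
`s ^ q * (1 + s) / 2 ^ (q - 1)` and `s ^ q * (1 + s)`. The latter integrates to
`y ^ (q + 1) / (q + 1) + y ^ (q + 2) / (q + 2)`, and replacing one of the denominators `q + 1`, `q + 2`
by the other makes both bounds strict. -/

lemma one_add_div_one_add_two_mul_mem_Icc {s : ℝ} (hs : 0 ≤ s) :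
    (1 + s) / (1 + 2 * s) ∈ Set.Icc (2⁻¹ : ℝ) 1 := by
  have h : 0 < 1 + 2 * s := by linarith
  constructor
  · rw [le_div_iff₀ h]; linarith
  · rw [div_le_one h]; linarith

lemma rpow_mul_one_add_rpow_div_eq {q s : ℝ} (hs : 0 ≤ s) :
    s ^ q * (1 + s) ^ q / (1 + 2 * s) ^ (q - 1) =
      s ^ q * (1 + s) * ((1 + s) / (1 + 2 * s)) ^ (q - 1) := by
  have h1 : 0 < 1 + s := by linarith
  have h2 : 0 < 1 + 2 * s := by linarith
  have hpow : (1 + s) ^ q = (1 + s) * (1 + s) ^ (q - 1) := by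
    simpa only [add_sub_cancel, rpow_one] using rpow_add h1 1 (q - 1)
  rw [div_rpow h1.le h2.le, hpow]
  ring

lemma rpow_mul_one_add_div_two_rpow_le {q s : ℝ} (hq : 1 ≤ q) (hs : 0 ≤ s) :
    s ^ q * (1 + s) / 2 ^ (q - 1) ≤ s ^ q * (1 + s) ^ q / (1 + 2 * s) ^ (q - 1) := by
  rw [rpow_mul_one_add_rpow_div_eq hs, div_eq_mul_inv, ← inv_rpow zero_le_two]
  gcongr
  exact (one_add_div_one_add_two_mul_mem_Icc hs).1

lemma rpow_mul_one_add_rpow_div_le {q s : ℝ} (hq : 1 ≤ q) (hs : 0 ≤ s) :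
    s ^ q * (1 + s) ^ q / (1 + 2 * s) ^ (q - 1) ≤ s ^ q * (1 + s) := by
  rw [rpow_mul_one_add_rpow_div_eq hs]
  refine mul_le_of_le_one_right (by positivity) (rpow_le_one (by positivity) ?_ (by linarith))
  exact (one_add_div_one_add_two_mul_mem_Icc hs).2

lemma integral_rpow_mul_one_add {q : ℝ} (hq : -1 < q) (y : ℝ) :
    ∫ s in (0 : ℝ)..y, s ^ q * (1 + s) = y ^ (q + 1) / (q + 1) + y ^ (q + 2) / (q + 2) := by
  have hsplit : (fun s : ℝ => s ^ q * (1 + s)) = fun s => s ^ q + s ^ (q + 1) := by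
    funext s
    rcases eq_or_ne s 0 with rfl | hs
    · simp [zero_rpow (by linarith : q + 1 ≠ 0)]
    · rw [rpow_add_one hs]; ring
  have hq' : -1 < q + 1 := by linarith
  rw [hsplit, intervalIntegral.integral_add (intervalIntegral.intervalIntegrable_rpow' hq)
    (intervalIntegral.intervalIntegrable_rpow' hq'), integral_rpow (Or.inl hq),
    integral_rpow (Or.inl hq'), zero_rpow (by linarith), zero_rpow (by linarith)]
  ring_nf

theorem stmt_7 (q y : ℝ) (hq : 1 < q) (hy : 0 < y) :
    (y ^ (q + 2) + y ^ (q + 1)) / ((q + 2) * 2 ^ (q - 1)) <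
      (∫ s in (0:ℝ)..y, s ^ q * (1 + s) ^ q / (1 + 2 * s) ^ (q - 1)) ∧
    (∫ s in (0:ℝ)..y, s ^ q * (1 + s) ^ q / (1 + 2 * s) ^ (q - 1)) <
      (y ^ (q + 2) + y ^ (q + 1)) / (q + 1) := by
  have hf : IntervalIntegrable (fun s => s ^ q * (1 + s) ^ q / (1 + 2 * s) ^ (q - 1))
      MeasureTheory.volume 0 y := by
    refine ContinuousOn.intervalIntegrable <|
      ContinuousOn.div (by fun_prop (disch := linarith)) (by fun_prop (disch := linarith)) ?_
    intro s hs
    rw [Set.uIcc_of_le hy.le] at hs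
    exact (rpow_pos_of_pos (by linarith [hs.1]) _).ne'
  have hg : IntervalIntegrable (fun s : ℝ => s ^ q * (1 + s)) MeasureTheory.volume 0 y :=
    (intervalIntegral.intervalIntegrable_rpow' (by linarith)).mul_continuousOn (by fun_prop)
  have hI := integral_rpow_mul_one_add (by linarith : -1 < q) y
  constructor
  · calc (y ^ (q + 2) + y ^ (q + 1)) / ((q + 2) * 2 ^ (q - 1))
        < (y ^ (q + 1) / (q + 1) + y ^ (q + 2) / (q + 2)) / 2 ^ (q - 1) := by
          rw [← div_div, add_div]
          gcongr ?_ / _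
          have : y ^ (q + 1) / (q + 2) < y ^ (q + 1) / (q + 1) :=
            div_lt_div_of_pos_left (by positivity) (by linarith) (by linarith)
          linarith
      _ = ∫ s in (0:ℝ)..y, s ^ q * (1 + s) / 2 ^ (q - 1) := by
          rw [intervalIntegral.integral_div, hI]
      _ ≤ _ := intervalIntegral.integral_mono_on hy.le (hg.div_const _) hf
          fun s hs => rpow_mul_one_add_div_two_rpow_le hq.le hs.1
  · calc _ ≤ ∫ s in (0:ℝ)..y, s ^ q * (1 + s) :=
          intervalIntegral.integral_mono_on hy.le hf hg
            fun s hs => rpow_mul_one_add_rpow_div_le hq.le hs.1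
      _ < _ := by
          have : y ^ (q + 2) / (q + 2) < y ^ (q + 2) / (q + 1) :=
            div_lt_div_of_pos_left (by positivity) (by linarith) (by linarith)
          rw [hI, add_div]
          linarith
end

section
/- Let q > 1 and let Ω^ℓ = (−ℓ/2, ℓ/2) × (−1, 1) be a rectangle, ℓ > 0. For the web torsion w(ℓ) := ∫₀¹ |Ω^ℓ_t|^q / |∂Ω^ℓ_t|^{q−1} dt, where Ω^ℓ_t = (−ℓ/2+t, ℓ/2−t) × (−1+t, 1−t) has area (ℓ−2t)(2−2t) and perimeter 2(ℓ−2t)+2(2−2t) when ℓ ≥ 2, one has lim_{ℓ→∞} (q+1)·w(ℓ)/(2ℓ) = 1. -/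
/-!
For `t ∈ [0, 1]` and `ℓ > 2` the area `(ℓ - 2t)(2 - 2t)` of `Ω^ℓ_t` lies between
`(ℓ - 2)(2 - 2t)` and `ℓ(2 - 2t)`, and its perimeter `2ℓ + 4 - 8t` between `2(ℓ - 2)` and
`2(ℓ + 2)`. Hence the integrand is squeezed between constant multiples of `(2 - 2t)^q`, whose
integral is `2^q / (q + 1)`. After normalisation both bounds on `(q + 1) w(ℓ) / (2ℓ)` take the
form `(x / ℓ) (x / y)^(q - 1)` with `x, y = ℓ + O(1)`, so they tend to `1`.
-/

open Real Filter Topology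

noncomputable def webIntegrand (q ℓ t : ℝ) : ℝ :=
  ((ℓ - 2 * t) * (2 - 2 * t)) ^ q / (2 * (ℓ - 2 * t) + 2 * (2 - 2 * t)) ^ (q - 1)

lemma intervalIntegrable_webIntegrand {q ℓ : ℝ} (hq : 1 ≤ q) (hℓ : 2 < ℓ) :
    IntervalIntegrable (webIntegrand q ℓ) MeasureTheory.volume 0 1 := by
  refine ContinuousOn.intervalIntegrable (ContinuousOn.div ?_ ?_ fun t ht => ?_)
  · exact (Continuous.rpow_const (by fun_prop) fun _ => Or.inr (by linarith)).continuousOn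
  · exact (Continuous.rpow_const (by fun_prop) fun _ => Or.inr (by linarith)).continuousOn
  · rw [Set.uIcc_of_le zero_le_one] at ht
    exact (rpow_pos_of_pos (by linarith [ht.2]) _).ne'

lemma webIntegrand_mem_Icc {q ℓ t : ℝ} (hq : 1 ≤ q) (hℓ : 2 < ℓ) (ht : t ∈ Set.Icc (0 : ℝ) 1) :
    webIntegrand q ℓ t ∈ Set.Icc ((ℓ - 2) ^ q / (2 * (ℓ + 2)) ^ (q - 1) * (2 - 2 * t) ^ q)
      (ℓ ^ q / (2 * (ℓ - 2)) ^ (q - 1) * (2 - 2 * t) ^ q) := by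
  obtain ⟨ht₀, ht₁⟩ := ht
  have hs : 0 ≤ 2 - 2 * t := by linarith
  simp only [webIntegrand, div_mul_eq_mul_div, ← mul_rpow (by linarith : (0 : ℝ) ≤ ℓ - 2) hs,
    ← mul_rpow (by linarith : (0 : ℝ) ≤ ℓ) hs]
  constructor <;> gcongr
  all_goals first
    | exact rpow_nonneg (by nlinarith) _
    | exact rpow_pos_of_pos (by nlinarith) _
    | nlinarith

lemma integral_webIntegrand_mem_Icc {q ℓ : ℝ} (hq : 1 ≤ q) (hℓ : 2 < ℓ) :
    ∫ t in (0 : ℝ)..1, webIntegrand q ℓ t ∈ Set.Icc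
      (∫ t in (0 : ℝ)..1, (ℓ - 2) ^ q / (2 * (ℓ + 2)) ^ (q - 1) * (2 - 2 * t) ^ q)
      (∫ t in (0 : ℝ)..1, ℓ ^ q / (2 * (ℓ - 2)) ^ (q - 1) * (2 - 2 * t) ^ q) := by
  have hmodel (c : ℝ) :
      IntervalIntegrable (fun t : ℝ => c * (2 - 2 * t) ^ q) MeasureTheory.volume 0 1 :=
    (continuous_const.mul (Continuous.rpow_const (by fun_prop) fun _ => Or.inr (by linarith)))
      |>.intervalIntegrable 0 1
  have hweb := intervalIntegrable_webIntegrand hq hℓ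
  exact ⟨intervalIntegral.integral_mono_on zero_le_one (hmodel _) hweb
      fun t ht => (webIntegrand_mem_Icc hq hℓ ht).1,
    intervalIntegral.integral_mono_on zero_le_one hweb (hmodel _)
      fun t ht => (webIntegrand_mem_Icc hq hℓ ht).2⟩

lemma integral_sub_mul_rpow {c q : ℝ} (hc : 0 < c) (hq : -1 < q) :
    ∫ t in (0 : ℝ)..1, (c - c * t) ^ q = c ^ q / (q + 1) := by
  rw [intervalIntegral.integral_comp_sub_mul (fun x => x ^ q) hc.ne', integral_rpow (Or.inl hq),
    mul_one, mul_zero, sub_self, sub_zero, zero_rpow (by linarith), sub_zero, smul_eq_mul,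
    rpow_add_one hc.ne']
  field_simp

lemma normalized_model_integral_eq {q x y ℓ : ℝ} (hq : -1 < q) (hx : 0 < x) (hy : 0 < y)
    (hℓ : 0 < ℓ) :
    (q + 1) * (∫ t in (0 : ℝ)..1, x ^ q / (2 * y) ^ (q - 1) * (2 - 2 * t) ^ q) / (2 * ℓ)
      = x / ℓ * (x / y) ^ (q - 1) := by
  rw [intervalIntegral.integral_const_mul, integral_sub_mul_rpow two_pos hq,
    mul_rpow zero_le_two hy.le, div_rpow hx.le hy.le, rpow_sub_one two_ne_zero,
    rpow_sub_one hx.ne']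
  have : q + 1 ≠ 0 := by linarith
  field_simp

lemma tendsto_add_div_add_atTop (a b : ℝ) :
    Tendsto (fun x : ℝ => (x + a) / (x + b)) atTop (𝓝 1) := by
  have h : Tendsto (fun x : ℝ => 1 + (a - b) / (x + b)) atTop (𝓝 (1 + 0)) :=
    tendsto_const_nhds.add
      (tendsto_const_nhds.div_atTop (tendsto_atTop_add_const_right _ b tendsto_id))
  rw [add_zero] at h
  refine h.congr' ?_
  filter_upwards [eventually_gt_atTop (-b)] with x hx
  have : x + b ≠ 0 := by linarith
  field_simp
  ring

lemma tendsto_add_div_self_mul_rpow_atTop (a b p : ℝ) :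
    Tendsto (fun x : ℝ => (x + a) / x * ((x + a) / (x + b)) ^ p) atTop (𝓝 1) := by
  have h₁ : Tendsto (fun x : ℝ => (x + a) / x) atTop (𝓝 1) := by
    simpa using tendsto_add_div_add_atTop a 0
  simpa using h₁.mul ((tendsto_add_div_add_atTop a b).rpow_const (Or.inl one_ne_zero) (p := p))

theorem stmt_13 (q : ℝ) (hq : 1 < q)
    (w : ℝ → ℝ)
    (hw : w = fun ℓ : ℝ =>
      ∫ t in (0:ℝ)..1,
        ((ℓ - 2 * t) * (2 - 2 * t)) ^ q /
          (2 * (ℓ - 2 * t) + 2 * (2 - 2 * t)) ^ (q - 1)) :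
    Tendsto (fun ℓ : ℝ => (q + 1) * w ℓ / (2 * ℓ)) atTop (nhds 1) := by
  subst hw
  have hq' : -1 < q := by linarith
  refine tendsto_of_tendsto_of_tendsto_of_le_of_le'
    (tendsto_add_div_self_mul_rpow_atTop (-2) 2 (q - 1))
    (tendsto_add_div_self_mul_rpow_atTop 0 (-2) (q - 1)) ?_ ?_ <;>
    filter_upwards [eventually_gt_atTop 2] with ℓ hℓ <;>
    obtain ⟨hlo, hhi⟩ := integral_webIntegrand_mem_Icc hq.le hℓ
  · rw [← sub_eq_add_neg,
      ← normalized_model_integral_eq hq' (by linarith) (by linarith) (by linarith)]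
    gcongr
    exact hlo
  · rw [← sub_eq_add_neg, add_zero,
      ← normalized_model_integral_eq hq' (by linarith) (by linarith) (by linarith)]
    gcongr
    exact hhi
end

section
/- Let q = 2. The function x ↦ ((x+2)²/(x+1)³) · ∫₀¹ t²(x+t)²/(x+2t) dt is strictly decreasing on (0, ∞). -/
/-!
Evaluating the integral turns the function into a rational function plus a rational multiple
of `L(x) = log (x + 2) - log x`, and its derivative has the sign of
`x² (3x² + 8x + 8) L(x) - 2 (3x³ + 5x² + 4x + 2)`. So it suffices to bound `L` from above.
With `u = 1 / (x + 1)` we have `L = log (1 + u) - log (1 - u) = 2 ∑ u^(2k+1) / (2k+1)`, and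
bounding every coefficient after the first by `1/3` gives `L ≤ 2u + 2u³ / (3 (1 - u²))`,
which is sharp enough.
-/

open Real

theorem log_one_add_sub_log_one_sub_le {u : ℝ} (hu₀ : 0 ≤ u) (hu₁ : u < 1) :
    log (1 + u) - log (1 - u) ≤ 2 * u + 2 * u ^ 3 / (3 * (1 - u ^ 2)) := by
  have hseries := hasSum_log_sub_log_of_abs_lt_one (abs_lt.2 ⟨by linarith, hu₁⟩)
  rw [← hasSum_nat_add_iff' 1] at hseries
  have hgeom := ((hasSum_geometric_of_lt_one (sq_nonneg u) (by nlinarith)).mul_left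
    (2 * u ^ 3 / 3))
  have hterm (k : ℕ) : 2 * (1 / (2 * ((k + 1 : ℕ) : ℝ) + 1)) * u ^ (2 * (k + 1) + 1)
      ≤ 2 * u ^ 3 / 3 * (u ^ 2) ^ k := by
    rw [show 2 * (k + 1) + 1 = 3 + 2 * k by ring, pow_add, pow_mul]
    have hpow : (0 : ℝ) ≤ u ^ 3 * (u ^ 2) ^ k := by positivity
    have hcoef : 1 / (2 * ((k + 1 : ℕ) : ℝ) + 1) ≤ 1 / 3 := by
      gcongr; push_cast; linarith [(k.cast_nonneg : (0 : ℝ) ≤ k)]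
    nlinarith
  have hle := hasSum_le hterm hseries hgeom
  norm_num at hle
  rw [mul_comm 3, ← div_div, div_eq_mul_inv _ (1 - u ^ 2)]
  linarith

theorem log_add_two_sub_log_le {x : ℝ} (hx : 0 < x) :
    log (x + 2) - log x ≤ 2 * (3 * x ^ 2 + 6 * x + 1) / (3 * x * (x + 1) * (x + 2)) := by
  have hu := log_one_add_sub_log_one_sub_le (u := 1 / (x + 1)) (by positivity)
    ((div_lt_one (by positivity)).2 (by linarith))
  rw [show 1 + 1 / (x + 1) = (x + 2) / (x + 1) by field_simp; ring,
    show 1 - 1 / (x + 1) = x / (x + 1) by field_simp; ring,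
    log_div (by positivity) (by positivity), log_div (by positivity) (by positivity)] at hu
  convert hu using 1
  · ring
  · rw [show 1 - (1 / (x + 1)) ^ 2 = x * (x + 2) / (x + 1) ^ 2 by field_simp; ring]
    field_simp
    ring

theorem integral_sq_mul_sq_div {x : ℝ} (hx : 0 < x) :
    ∫ t in (0:ℝ)..1, t ^ 2 * (x + t) ^ 2 / (x + 2 * t)
      = (2 + 4 * x + x ^ 2 - x ^ 3) / 16 + x ^ 4 / 32 * (log (x + 2) - log x) := by
  have hpos : ∀ t ∈ Set.uIcc (0:ℝ) 1, 0 < x + 2 * t := fun t ht => by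
    rw [Set.uIcc_of_le zero_le_one] at ht
    linarith [ht.1]
  have hderiv : ∀ t ∈ Set.uIcc (0:ℝ) 1,
      HasDerivAt (fun t => t ^ 4 / 8 + x * t ^ 3 / 4 + x ^ 2 * t ^ 2 / 16 - x ^ 3 * t / 16
          + x ^ 4 / 32 * log (x + 2 * t))
        (t ^ 2 * (x + t) ^ 2 / (x + 2 * t)) t := fun t ht => by
    have hlin : HasDerivAt (fun t => x + 2 * t) 2 t := by
      simpa using ((hasDerivAt_id t).const_mul 2).const_add x
    refine ((((((hasDerivAt_pow 4 t).div_const 8).add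
        (((hasDerivAt_pow 3 t).const_mul x).div_const 4)).add
        (((hasDerivAt_pow 2 t).const_mul (x ^ 2)).div_const 16)).sub
        (((hasDerivAt_id t).const_mul (x ^ 3)).div_const 16)).add
        ((hlin.log (hpos t ht).ne').const_mul (x ^ 4 / 32))).congr_deriv ?_
    have := (hpos t ht).ne'
    field_simp
    ring
  have hint : IntervalIntegrable (fun t => t ^ 2 * (x + t) ^ 2 / (x + 2 * t))
      MeasureTheory.volume 0 1 :=
    (ContinuousOn.div (by fun_prop) (by fun_prop) fun t ht => (hpos t ht).ne').intervalIntegrable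
  rw [intervalIntegral.integral_eq_sub_of_hasDerivAt hderiv hint]
  norm_num
  ring

noncomputable def closedForm (x : ℝ) : ℝ :=
  (x + 2) ^ 2 / (x + 1) ^ 3 *
    ((2 + 4 * x + x ^ 2 - x ^ 3) / 16 + x ^ 4 / 32 * (log (x + 2) - log x))

theorem hasDerivAt_closedForm {x : ℝ} (hx : 0 < x) :
    HasDerivAt closedForm
      (x * (x + 2) / (32 * (x + 1) ^ 4) *
        (x ^ 2 * (3 * x ^ 2 + 8 * x + 8) * (log (x + 2) - log x)
          - 2 * (3 * x ^ 3 + 5 * x ^ 2 + 4 * x + 2))) x := by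
  have hx1 : x + 1 ≠ 0 := by positivity
  have hx2 : x + 2 ≠ 0 := by positivity
  have hprefactor := (((hasDerivAt_id x).add_const 2).pow 2).div
    (((hasDerivAt_id x).add_const 1).pow 3) (pow_ne_zero 3 hx1)
  have hlog := (((hasDerivAt_id x).add_const 2).log hx2).sub (hasDerivAt_log hx.ne')
  refine (hprefactor.mul (((((hasDerivAt_const x 2).add ((hasDerivAt_id x).const_mul 4)).add
    (hasDerivAt_pow 2 x)).sub (hasDerivAt_pow 3 x)).div_const 16 |>.add
    (((hasDerivAt_pow 4 x).div_const 32).mul hlog))).congr_deriv ?_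
  simp only [id, Pi.pow_apply, Pi.div_apply, Pi.add_apply, Pi.sub_apply, Pi.mul_apply]
  field_simp
  ring

theorem mul_log_add_two_sub_log_lt {x : ℝ} (hx : 0 < x) :
    x ^ 2 * (3 * x ^ 2 + 8 * x + 8) * (log (x + 2) - log x)
      < 2 * (3 * x ^ 3 + 5 * x ^ 2 + 4 * x + 2) :=
  calc x ^ 2 * (3 * x ^ 2 + 8 * x + 8) * (log (x + 2) - log x)
      ≤ x ^ 2 * (3 * x ^ 2 + 8 * x + 8) *
          (2 * (3 * x ^ 2 + 6 * x + 1) / (3 * x * (x + 1) * (x + 2))) := by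
        gcongr
        exact log_add_two_sub_log_le hx
    _ = 2 * x * (3 * x ^ 2 + 8 * x + 8) * (3 * x ^ 2 + 6 * x + 1) / (3 * (x + 1) * (x + 2)) := by
        field_simp
    _ < 2 * (3 * x ^ 3 + 5 * x ^ 2 + 4 * x + 2) := by
        rw [div_lt_iff₀ (by positivity)]
        nlinarith [sq_nonneg x]

theorem strictAntiOn_closedForm : StrictAntiOn closedForm (Set.Ioi 0) := by
  refine strictAntiOn_of_deriv_neg (convex_Ioi 0)
    (fun x hx => (hasDerivAt_closedForm hx).continuousAt.continuousWithinAt) fun x hx => ?_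
  rw [interior_Ioi, Set.mem_Ioi] at hx
  rw [(hasDerivAt_closedForm hx).deriv]
  exact mul_neg_of_pos_of_neg (by positivity)
    (sub_neg.2 (mul_log_add_two_sub_log_lt hx))

theorem stmt_18 :
    StrictAntiOn
      (fun x : ℝ =>
        ((x + 2) ^ 2 / (x + 1) ^ 3) *
          ∫ t in (0:ℝ)..1, t ^ 2 * (x + t) ^ 2 / (x + 2 * t))
      (Set.Ioi 0) :=
  strictAntiOn_closedForm.congr fun x hx => by
    rw [closedForm, integral_sq_mul_sq_div hx]
end

section
/- For every real q > 1 and every x > 0, ((x+2)^q/(x+1)^{q+1}) · ∫₀¹ t^q (x+t)^q/(x+2t)^{q−1} dt < 2/(q+2), i.e., among polygonal stadiums the normalized web torsion w_p(P^ℓ)|∂P^ℓ|^q/|P^ℓ|^{q+1} is strictly below its value 2/(q+2) for circumscribed polygons (ℓ = 0). -/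
/-!
With `u t = t (x + t) / (x + 1)`, which increases from `u 0 = 0` to `u 1 = 1` with
`u' t = (x + 2t) / (x + 1)`, the normalized integrand equals `r(t)^q u'(t)` where
`r(t) = (x + 2) u(t) / (x + 2t)`. Since
`(x + 2t)² (x + 1) - (x + 2)² t (x + t) = x² (1 - t) (x + 1 + t)`, we have `r² ≤ u` on `[0, 1]`,
strictly inside when `x > 0`. Hence the integral is strictly below
`∫₀¹ u^(q/2) u' = 1 / (q/2 + 1) = 2 / (q + 2)`.
-/

open Real intervalIntegral

namespace StadiumTorsion

variable {x q t : ℝ}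

noncomputable def u (x t : ℝ) : ℝ := t * (x + t) / (x + 1)

noncomputable def ratio (x t : ℝ) : ℝ := (x + 2) / (x + 2 * t) * u x t

lemma hasDerivAt_u (x t : ℝ) : HasDerivAt (u x) ((x + 2 * t) / (x + 1)) t := by
  have := ((hasDerivAt_id' t).mul ((hasDerivAt_id' t).const_add x)).div_const (x + 1)
  exact this.congr_deriv (by ring)

lemma continuous_u (x : ℝ) : Continuous (u x) :=
  continuous_iff_continuousAt.2 fun t ↦ (hasDerivAt_u x t).continuousAt

lemma integral_u_rpow_mul_deriv (hx : x + 1 ≠ 0) {p : ℝ} (hp : 0 ≤ p) :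
    ∫ t in (0 : ℝ)..1, u x t ^ p * ((x + 2 * t) / (x + 1)) = 1 / (p + 1) := by
  have hsub := integral_comp_mul_deriv (a := 0) (b := 1) (fun t _ ↦ hasDerivAt_u x t)
    (by fun_prop) (continuous_rpow_const hp)
  have hu0 : u x 0 = 0 := by simp [u]
  have hu1 : u x 1 = 1 := by simp only [u]; field_simp
  simp only [Function.comp_def, hu0, hu1] at hsub
  rw [hsub, integral_rpow (.inl (by linarith)), one_rpow, zero_rpow (by linarith)]
  ring

lemma ratio_nonneg (hx : 0 ≤ x) (ht : 0 ≤ t) : 0 ≤ ratio x t := by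
  unfold ratio u
  positivity

lemma u_sub_sq_ratio (hx : x + 1 ≠ 0) (hxt : x + 2 * t ≠ 0) :
    u x t - ratio x t ^ 2 =
      x ^ 2 * (1 - t) * (x + 1 + t) * u x t / ((x + 2 * t) ^ 2 * (x + 1)) := by
  -- `field_simp` rewrites `x + 2 * t` into this form before looking for nonvanishing facts
  have : x + t * 2 ≠ 0 := by rwa [mul_comm]
  simp only [ratio, u]
  field_simp
  ring

lemma sq_ratio_le_u (hx : 0 ≤ x) (ht₀ : 0 < t) (ht₁ : t ≤ 1) : ratio x t ^ 2 ≤ u x t := by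
  rw [← sub_nonneg, u_sub_sq_ratio (by positivity) (by positivity)]
  have : 0 ≤ u x t := by unfold u; positivity
  have : 0 ≤ 1 - t := by linarith
  positivity

lemma sq_ratio_lt_u (hx : 0 < x) (ht₀ : 0 < t) (ht₁ : t < 1) : ratio x t ^ 2 < u x t := by
  rw [← sub_pos, u_sub_sq_ratio (by positivity) (by positivity)]
  have : 0 < u x t := by unfold u; positivity
  have : 0 < 1 - t := by linarith
  positivity

lemma integrand_eq (hx : 0 ≤ x) (ht : 0 < t) :
    (x + 2) ^ q / (x + 1) ^ (q + 1) * (t ^ q * (x + t) ^ q / (x + 2 * t) ^ (q - 1)) =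
      ratio x t ^ q * ((x + 2 * t) / (x + 1)) := by
  have hxt : 0 < x + 2 * t := by positivity
  have hx1 : 0 < x + 1 := by positivity
  rw [ratio, u, div_mul_div_comm (x + 2), div_rpow (by positivity) (by positivity),
    mul_rpow (by positivity) (by positivity),
    mul_rpow ht.le (by positivity), mul_rpow hxt.le hx1.le, rpow_sub_one hxt.ne',
    rpow_add_one hx1.ne']
  have : (x + 2 * t) ^ q ≠ 0 := (rpow_pos_of_pos hxt q).ne'
  have : (x + 1) ^ q ≠ 0 := (rpow_pos_of_pos hx1 q).ne'
  field_simp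

lemma rpow_le_rpow_half_of_sq_le {a b : ℝ} (ha : 0 ≤ a) (hab : a ^ 2 ≤ b) (hq : 0 ≤ q) :
    a ^ q ≤ b ^ (q / 2) := by
  calc a ^ q = (a ^ 2) ^ (q / 2) := by rw [← rpow_natCast_mul ha]; congr 1; push_cast; ring
    _ ≤ b ^ (q / 2) := rpow_le_rpow (by positivity) hab (by positivity)

lemma rpow_lt_rpow_half_of_sq_lt {a b : ℝ} (ha : 0 ≤ a) (hab : a ^ 2 < b) (hq : 0 < q) :
    a ^ q < b ^ (q / 2) := by
  calc a ^ q = (a ^ 2) ^ (q / 2) := by rw [← rpow_natCast_mul ha]; congr 1; push_cast; ring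
    _ < b ^ (q / 2) := rpow_lt_rpow (by positivity) hab (by positivity)

lemma continuousOn_integrand (hx : 0 < x) (hq : 0 ≤ q) :
    ContinuousOn (fun t ↦ t ^ q * (x + t) ^ q / (x + 2 * t) ^ (q - 1)) (Set.Icc 0 1) := by
  have hpos : ∀ t ∈ Set.Icc (0 : ℝ) 1, 0 < x + 2 * t := fun t ht ↦ by linarith [ht.1]
  have hnum : Continuous fun t : ℝ ↦ t ^ q * (x + t) ^ q :=
    (continuous_rpow_const hq).mul ((continuous_rpow_const hq).comp (continuous_const_add x))
  exact hnum.continuousOn.div (ContinuousOn.rpow_const (by fun_prop) fun t ht ↦ .inl (hpos t ht).ne')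
    fun t ht ↦ (rpow_pos_of_pos (hpos t ht) _).ne'

lemma integrand_le_majorant (hx : 0 ≤ x) (hq : 0 ≤ q) (ht₀ : 0 < t) (ht₁ : t ≤ 1) :
    (x + 2) ^ q / (x + 1) ^ (q + 1) * (t ^ q * (x + t) ^ q / (x + 2 * t) ^ (q - 1)) ≤
      u x t ^ (q / 2) * ((x + 2 * t) / (x + 1)) := by
  rw [integrand_eq hx ht₀]
  gcongr
  exact rpow_le_rpow_half_of_sq_le (ratio_nonneg hx ht₀.le) (sq_ratio_le_u hx ht₀ ht₁) hq

lemma integrand_lt_majorant (hx : 0 < x) (hq : 0 < q) (ht₀ : 0 < t) (ht₁ : t < 1) :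
    (x + 2) ^ q / (x + 1) ^ (q + 1) * (t ^ q * (x + t) ^ q / (x + 2 * t) ^ (q - 1)) <
      u x t ^ (q / 2) * ((x + 2 * t) / (x + 1)) := by
  rw [integrand_eq hx.le ht₀]
  gcongr
  exact rpow_lt_rpow_half_of_sq_lt (ratio_nonneg hx.le ht₀.le) (sq_ratio_lt_u hx ht₀ ht₁) hq

end StadiumTorsion

open StadiumTorsion in
theorem stmt_19 (q x : ℝ) (hq : 1 < q) (hx : 0 < x) :
    ((x + 2) ^ q / (x + 1) ^ (q + 1)) *
        (∫ t in (0:ℝ)..1, t ^ q * (x + t) ^ q / (x + 2 * t) ^ (q - 1)) <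
      2 / (q + 2) := by
  have hq₀ : 0 < q := by linarith
  have hmajorant :
      ∫ t in (0 : ℝ)..1, u x t ^ (q / 2) * ((x + 2 * t) / (x + 1)) = 2 / (q + 2) := by
    rw [integral_u_rpow_mul_deriv (by positivity) (by positivity)]
    field_simp
  rw [← integral_const_mul, ← hmajorant]
  refine integral_lt_integral_of_continuousOn_of_le_of_exists_lt one_pos
    (continuousOn_const.mul (continuousOn_integrand hx hq₀.le)) ?_ ?_ ⟨1 / 2, by norm_num, ?_⟩
  · exact (((continuous_rpow_const (by positivity)).comp (continuous_u x)).mul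
      (by fun_prop)).continuousOn
  · exact fun t ⟨ht₀, ht₁⟩ ↦ integrand_le_majorant hx.le hq₀.le ht₀ ht₁
  · exact integrand_lt_majorant hx hq₀ (by norm_num) (by norm_num)
end
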